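/- arXiv:2209.13634 — 3 statements merged into one kernel-verified Lean document; each statement's English description precedes it below -/
import Mathlib

section
/- Let A be a principal ideal domain that is an integral domain with infinitely many units, and let F be its field of fractions. Let n ≥ 1 and let P be a polynomial over F in the n² matrix entry variables (i.e. P ∈ F[X_{ij} : 1 ≤ i,j ≤ n]). If P(g) = 0 for every matrix g with entries in A that is invertible over A (i.e. g ∈ GL(n,A)), then P(h) = 0 for every invertible matrix h ∈ GL(n,F). -/
open Matrix MvPolynomial

/-- A multivariate polynomial over an integral domain that vanishes on a product of
infinite sets is zero. `Fin` version. -/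
theorem mv_eq_zero_of_vanish_fin {F : Type*} [CommRing F] [IsDomain F] :
    ∀ (m : ℕ) (Q : MvPolynomial (Fin m) F) (S : Fin m → Set F),
      (∀ i, (S i).Infinite) →
      (∀ v : Fin m → F, (∀ i, v i ∈ S i) → eval v Q = 0) → Q = 0 := by
  intro m
  induction m with
  | zero =>
    intro Q S _ hv
    have h0 : eval (fun i => (i : Fin 0).elim0) Q = 0 := hv _ (fun i => i.elim0)
    rw [MvPolynomial.eq_C_of_isEmpty Q] at h0 ⊢
    simpa using h0
  | succ m ih =>
    intro Q S hS hv
    have key : ∀ v : Fin m → F, (∀ i, v i ∈ S i.succ) →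
        Polynomial.map (eval v) (finSuccEquiv F m Q) = 0 := by
      intro v hvmem
      apply Polynomial.eq_zero_of_infinite_isRoot
      apply (hS 0).mono
      intro y hy
      simp only [Set.mem_setOf_eq, Polynomial.IsRoot]
      rw [← MvPolynomial.eval_eq_eval_mv_eval']
      apply hv
      intro i
      refine Fin.cases ?_ ?_ i
      · simpa using hy
      · intro j; simpa using hvmem j
    have hcoeff : ∀ k, (finSuccEquiv F m Q).coeff k = 0 := by
      intro k
      apply ih _ (fun i => S i.succ) (fun i => hS i.succ)
      intro v hvmem
      have := congrArg (fun p => Polynomial.coeff p k) (key v hvmem)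
      simpa [Polynomial.coeff_map] using this
    have h0 : finSuccEquiv F m Q = 0 := Polynomial.ext (by simp [hcoeff])
    have := congrArg (finSuccEquiv F m).symm h0
    simpa using this

/-- A multivariate polynomial over an integral domain that vanishes on a product of
infinite sets is zero. -/
theorem mv_eq_zero_of_vanish {F σ : Type*} [CommRing F] [IsDomain F] [Fintype σ]
    (Q : MvPolynomial σ F) (S : σ → Set F)
    (hS : ∀ i, (S i).Infinite)
    (hv : ∀ v : σ → F, (∀ i, v i ∈ S i) → eval v Q = 0) : Q = 0 := by
  classical
  let e := Fintype.equivFin σ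
  have h0 : MvPolynomial.rename e Q = 0 := by
    apply mv_eq_zero_of_vanish_fin _ _ (fun j => S (e.symm j)) (fun j => hS _)
    intro v hvmem
    rw [MvPolynomial.eval_rename]
    apply hv
    intro i
    simpa using hvmem (e i)
  have := congrArg (MvPolynomial.rename e.symm) h0
  simpa [MvPolynomial.rename_rename] using this

/-- Family of matrices: product of transvections, a diagonal, and more transvections,
with specified coefficients. -/
def tvFamMatrix {n k k' : ℕ} (R : Type*) [CommRing R]
    (idx : Fin k → Fin n × Fin n) (idx' : Fin k' → Fin n × Fin n)
    (x : Fin k → R) (w : Fin n → R) (y : Fin k' → R) : Matrix (Fin n) (Fin n) R :=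
  (List.ofFn fun m => Matrix.transvection (idx m).1 (idx m).2 (x m)).prod *
    Matrix.diagonal w *
    (List.ofFn fun m => Matrix.transvection (idx' m).1 (idx' m).2 (y m)).prod

theorem transvection_map' {n : Type*} [DecidableEq n] {R S : Type*} [CommRing R] [CommRing S]
    (f : R →+* S) (i j : n) (c : R) :
    (Matrix.transvection i j c).map f = Matrix.transvection i j (f c) := by
  ext a b
  simp [Matrix.transvection, Matrix.single, Matrix.map_apply, Matrix.add_apply,
    Matrix.one_apply, apply_ite f]

theorem tvFamMatrix_map {n k k' : ℕ} {R S : Type*} [CommRing R] [CommRing S]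
    (f : R →+* S) (idx : Fin k → Fin n × Fin n) (idx' : Fin k' → Fin n × Fin n)
    (x : Fin k → R) (w : Fin n → R) (y : Fin k' → R) :
    (tvFamMatrix R idx idx' x w y).map f =
      tvFamMatrix S idx idx' (f ∘ x) (f ∘ w) (f ∘ y) := by
  have hmap : ∀ (M : Matrix (Fin n) (Fin n) R), M.map f = f.mapMatrix M := fun _ => rfl
  simp only [tvFamMatrix, hmap, _root_.map_mul, map_list_prod, List.map_ofFn]
  congr 1
  · congr 1
    · refine congrArg List.prod (congrArg List.ofFn ?_)
      funext m
      simp only [Function.comp_apply, ← hmap, transvection_map']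
    · rw [← hmap, Matrix.diagonal_map (map_zero f)]
      rfl
  · refine congrArg List.prod (congrArg List.ofFn ?_)
    funext m
    simp only [Function.comp_apply, ← hmap, transvection_map']

theorem tvFamMatrix_det {n k k' : ℕ} {R : Type*} [CommRing R]
    (idx : Fin k → Fin n × Fin n) (idx' : Fin k' → Fin n × Fin n)
    (hidx : ∀ m, (idx m).1 ≠ (idx m).2) (hidx' : ∀ m, (idx' m).1 ≠ (idx' m).2)
    (x : Fin k → R) (w : Fin n → R) (y : Fin k' → R) :
    (tvFamMatrix R idx idx' x w y).det = ∏ i, w i := by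
  have hdet : ∀ (j : ℕ) (g : Fin j → Matrix (Fin n) (Fin n) R), (∀ m, (g m).det = 1) →
      (List.ofFn g).prod.det = 1 := by
    intro j g hg
    rw [show (List.ofFn g).prod.det = Matrix.detMonoidHom (List.ofFn g).prod from rfl,
      MonoidHom.map_list_prod, List.map_ofFn]
    apply List.prod_eq_one
    intro a ha
    rw [List.mem_ofFn] at ha
    obtain ⟨m, rfl⟩ := ha
    exact hg m
  rw [tvFamMatrix, det_mul, det_mul,
    hdet _ _ (fun m => det_transvection_of_ne _ _ (hidx m) _),
    hdet _ _ (fun m => det_transvection_of_ne _ _ (hidx' m) _),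
    det_diagonal, one_mul, mul_one]

/-- A polynomial function on `GL(n,F)` (a polynomial in the `n²` matrix entries over the
fraction field `F` of a PID `A` with infinitely many units) which vanishes on `GL(n,A)`
vanishes on all of `GL(n,F)`. -/
theorem polynomial_vanishing_on_GLnA_vanishes_on_GLnF
    (A F : Type*) [CommRing A] [IsDomain A] [IsPrincipalIdealRing A] [Infinite Aˣ]
    [Field F] [Algebra A F] [IsFractionRing A F]
    (n : ℕ) (hn : 1 ≤ n)
    (P : MvPolynomial (Fin n × Fin n) F)
    (hvan : ∀ g : GL (Fin n) A,
      MvPolynomial.eval (fun q => algebraMap A F ((g : Matrix (Fin n) (Fin n) A) q.1 q.2)) P = 0) :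
    ∀ h : GL (Fin n) F,
      MvPolynomial.eval (fun q => (h : Matrix (Fin n) (Fin n) F) q.1 q.2) P = 0 := by
  classical
  intro h
  obtain ⟨L, L', D, hM⟩ :=
    Matrix.Pivot.exists_list_transvec_mul_diagonal_mul_list_transvec
      ((h : Matrix (Fin n) (Fin n) F))
  -- data of the transvection lists
  set idx : Fin L.length → Fin n × Fin n := fun m => ((L.get m).i, (L.get m).j) with hidxdef
  set idx' : Fin L'.length → Fin n × Fin n := fun m => ((L'.get m).i, (L'.get m).j) with hidxdef'
  set cs : Fin L.length → F := fun m => (L.get m).c with hcsdef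
  set cs' : Fin L'.length → F := fun m => (L'.get m).c with hcsdef'
  have hfam : tvFamMatrix F idx idx' cs D cs' = (h : Matrix (Fin n) (Fin n) F) := by
    rw [hM, tvFamMatrix]
    have e1 : (List.ofFn fun m => Matrix.transvection (idx m).1 (idx m).2 (cs m)) =
        L.map Matrix.TransvectionStruct.toMatrix := by
      conv_rhs => rw [← List.ofFn_get L]
      rw [List.map_ofFn]
      refine congrArg List.ofFn (funext fun m => ?_)
      rcases hLm : L.get m with ⟨i, j, hij, c⟩
      simp [hidxdef, hcsdef, hLm, Matrix.TransvectionStruct.toMatrix]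
    have e2 : (List.ofFn fun m => Matrix.transvection (idx' m).1 (idx' m).2 (cs' m)) =
        L'.map Matrix.TransvectionStruct.toMatrix := by
      conv_rhs => rw [← List.ofFn_get L']
      rw [List.map_ofFn]
      refine congrArg List.ofFn (funext fun m => ?_)
      rcases hLm : L'.get m with ⟨i, j, hij, c⟩
      simp [hidxdef', hcsdef', hLm, Matrix.TransvectionStruct.toMatrix]
    rw [e1, e2]
  -- the polynomial family
  set ι := (Fin L.length ⊕ (Fin n ⊕ Fin L'.length)) with hι
  set Xf : (Fin n × Fin n) → MvPolynomial ι F := fun q =>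
    tvFamMatrix (MvPolynomial ι F) idx idx'
      (fun m => X (Sum.inl m)) (fun i => X (Sum.inr (Sum.inl i)))
      (fun m => X (Sum.inr (Sum.inr m))) q.1 q.2 with hXf
  set Q : MvPolynomial ι F := MvPolynomial.aeval Xf P with hQdef
  have keyeval : ∀ v : ι → F, eval v Q =
      eval (fun q => tvFamMatrix F idx idx'
        (fun m => v (Sum.inl m)) (fun i => v (Sum.inr (Sum.inl i)))
        (fun m => v (Sum.inr (Sum.inr m))) q.1 q.2) P := by
    intro v
    rw [hQdef, map_aeval]
    have hcomp : (eval v).comp (algebraMap F (MvPolynomial ι F)) = RingHom.id F := by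
      ext r; simp
    rw [hcomp]
    rw [show eval₂Hom (RingHom.id F) (fun q => eval v (Xf q)) =
        eval (fun q => eval v (Xf q)) from rfl]
    refine congrArg (fun f => eval f P) (funext fun q => ?_)
    show ((tvFamMatrix (MvPolynomial ι F) idx idx' _ _ _).map (eval v)) q.1 q.2 = _
    rw [tvFamMatrix_map]
    refine congrArg (fun M : Matrix (Fin n) (Fin n) F => M q.1 q.2) ?_
    simp only [Function.comp_def, eval_X]
  -- `Q` vanishes on a product of infinite sets
  have hQ : Q = 0 := by
    have hinj : Function.Injective (algebraMap A F) := IsFractionRing.injective A F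
    haveI : Infinite A := Infinite.of_injective (Units.val : Aˣ → A) (fun _ _ h => Units.ext h)
    apply mv_eq_zero_of_vanish Q
      (Sum.elim (fun _ => Set.range (algebraMap A F))
        (Sum.elim (fun _ => (algebraMap A F) '' (Set.range (Units.val : Aˣ → A)))
          (fun _ => Set.range (algebraMap A F))))
    · rintro (m | i | m)
      · exact Set.infinite_range_of_injective hinj
      · exact ((Set.infinite_range_of_injective
          (fun a b hab => Units.ext hab : Function.Injective (Units.val : Aˣ → A)))).image
          (hinj.injOn)
      · exact Set.infinite_range_of_injective hinj
    · intro v hvmem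
      rw [keyeval v]
      have ha : ∀ m, ∃ a : A, algebraMap A F a = v (Sum.inl m) := fun m => hvmem (Sum.inl m)
      choose a hA using ha
      have hu : ∀ i, ∃ u : Aˣ, algebraMap A F (u : A) = v (Sum.inr (Sum.inl i)) := by
        intro i
        obtain ⟨_, ⟨u, rfl⟩, hx⟩ := hvmem (Sum.inr (Sum.inl i))
        exact ⟨u, hx⟩
      choose u hU using hu
      have hb : ∀ m, ∃ b : A, algebraMap A F b = v (Sum.inr (Sum.inr m)) := fun m =>
        hvmem (Sum.inr (Sum.inr m))
      choose b hB using hb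
      set N : Matrix (Fin n) (Fin n) A := tvFamMatrix A idx idx' a (fun i => (u i : A)) b with hN
      have hNdet : IsUnit N.det := by
        rw [hN, tvFamMatrix_det idx idx' (fun m => (L.get m).hij) (fun m => (L'.get m).hij)]
        exact ⟨∏ i, u i, by simp⟩
      have hNunit : IsUnit N := (Matrix.isUnit_iff_isUnit_det N).mpr hNdet
      have hv0 := hvan hNunit.unit
      rw [show ((hNunit.unit : GL (Fin n) A) : Matrix (Fin n) (Fin n) A) = N
        from hNunit.unit_spec] at hv0
      have hNmat : tvFamMatrix F idx idx'
            (fun m => v (Sum.inl m)) (fun i => v (Sum.inr (Sum.inl i)))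
            (fun m => v (Sum.inr (Sum.inr m))) = N.map (algebraMap A F) := by
        rw [hN, tvFamMatrix_map]
        simp only [Function.comp_def, hA, hU, hB]
      have hNmap : (fun q : Fin n × Fin n => tvFamMatrix F idx idx'
            (fun m => v (Sum.inl m)) (fun i => v (Sum.inr (Sum.inl i)))
            (fun m => v (Sum.inr (Sum.inr m))) q.1 q.2) =
          (fun q : Fin n × Fin n => algebraMap A F (N q.1 q.2)) := by
        funext q
        rw [hNmat]
        rfl
      rw [hNmap]
      exact hv0
  -- evaluate at the decomposition of `h`
  have := congrArg (eval (Sum.elim cs (Sum.elim D cs'))) hQ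
  rw [keyeval, map_zero] at this
  rw [show (fun q : Fin n × Fin n => (h : Matrix (Fin n) (Fin n) F) q.1 q.2) =
      (fun q : Fin n × Fin n => tvFamMatrix F idx idx'
        (fun m => Sum.elim cs (Sum.elim D cs') (Sum.inl m))
        (fun i => Sum.elim cs (Sum.elim D cs') (Sum.inr (Sum.inl i)))
        (fun m => Sum.elim cs (Sum.elim D cs') (Sum.inr (Sum.inr m))) q.1 q.2) from ?_]
  · exact this
  · funext q
    rw [show (fun m => Sum.elim cs (Sum.elim D cs') (Sum.inl m)) = cs from rfl,
      show (fun i => Sum.elim cs (Sum.elim D cs') (Sum.inr (Sum.inl i))) = D from rfl,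
      show (fun m => Sum.elim cs (Sum.elim D cs') (Sum.inr (Sum.inr m))) = cs' from rfl,
      hfam]
end

section
/- Let R be a discrete valuation ring with fraction field K, and let n ≥ 1, d ≥ 1 with char K = 0 or char K > d. Then the K-linear span of the set of operators { ρ_{n,d}(g) : g ∈ GL(n,R) } is the full endomorphism algebra End_K(K[x_1,…,x_n]_{(d)}). In other words, the R-module H_{n,d} spanned by the image of ρ_{n,d} restricted to GL(n,R) is an order in End_K(K[x_1,…,x_n]_{(d)}). -/
open MvPolynomial

/-- The change-of-variables action of a matrix `g` on polynomials, induced by the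
algebra substitution `x_i ↦ ∑ j, g i j • x_j`. -/
noncomputable def changeOfVar {K : Type*} [CommSemiring K] {n : ℕ}
    (g : Matrix (Fin n) (Fin n) K) :
    MvPolynomial (Fin n) K →ₐ[K] MvPolynomial (Fin n) K :=
  aeval fun i => ∑ j, C (g i j) * X j

namespace SpanCOV

variable {K : Type*} [Field K] {n d : ℕ}

lemma changeOfVar_X (g : Matrix (Fin n) (Fin n) K) (i : Fin n) :
    changeOfVar g (X i) = ∑ j, C (g i j) * X j := by
  simp [changeOfVar]

lemma changeOfVar_comp (g h : Matrix (Fin n) (Fin n) K) :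
    (changeOfVar g).comp (changeOfVar h) = changeOfVar (h * g) := by
  apply MvPolynomial.algHom_ext
  intro i
  simp only [AlgHom.comp_apply, changeOfVar_X, map_sum, map_mul, changeOfVar]
  simp only [aeval_X, algHom_C, Matrix.mul_apply, map_sum, map_mul, Finset.sum_mul,
    Finset.mul_sum, algebraMap_eq]
  rw [Finset.sum_comm]
  congr 1; ext j; congr 1; ext k
  congr 1; exact Finset.sum_congr rfl fun x _ => by ring

lemma changeOfVar_one : changeOfVar (1 : Matrix (Fin n) (Fin n) K) = AlgHom.id K _ := by
  apply MvPolynomial.algHom_ext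
  intro i
  simp [changeOfVar_X, Matrix.one_apply, Finset.sum_ite_eq, ite_and]

lemma changeOfVar_isHomogeneous (g : Matrix (Fin n) (Fin n) K) {p : MvPolynomial (Fin n) K}
    (hp : p.IsHomogeneous d) : (changeOfVar g p).IsHomogeneous d := by
  have := hp.aeval (n := 1) (fun i => ∑ j, C (g i j) * X j)
    (fun i => MvPolynomial.IsHomogeneous.sum _ _ _ fun j _ => isHomogeneous_C_mul_X _ _)
  simpa [changeOfVar] using this


section
variable (K : Type*) [Field K] (n d : ℕ)



abbrev mos : Set (Fin n →₀ ℕ) := {α | α.degree = d}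

lemma mos_finite : (mos n d).Finite := by
  apply Set.Finite.subset (Finset.finsuppAntidiag (Finset.univ : Finset (Fin n)) d).finite_toSet
  intro α hα
  simp only [Finset.coe_sort_coe, Finset.mem_coe, Finset.mem_finsuppAntidiag]
  refine ⟨?_, Finset.subset_univ _⟩
  rw [← hα]
  exact (Finset.sum_subset (Finset.subset_univ _) (by
    intro x _ hx
    simpa using Finsupp.notMem_support_iff.mp hx)).symm

noncomputable instance : Fintype (mos n d) := (mos_finite n d).fintype

lemma hVeq : homogeneousSubmodule (Fin n) K d = restrictSupport K (mos n d) :=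
  homogeneousSubmodule_eq_finsupp_supported _ _ _

noncomputable def mBasis : Module.Basis (mos n d) K (homogeneousSubmodule (Fin n) K d) :=
  (basisRestrictSupport K (mos n d)).map (LinearEquiv.ofEq _ _ (hVeq K n d).symm)

lemma coe_mBasis (α : mos n d) :
    ((mBasis K n d α : homogeneousSubmodule (Fin n) K d) : MvPolynomial (Fin n) K)
      = monomial (α : Fin n →₀ ℕ) 1 := by
  have hmem : (monomial (α : Fin n →₀ ℕ) (1:K)) ∈ restrictSupport K (mos n d) := by
    rw [← hVeq]
    exact (mem_homogeneousSubmodule _ _).2 (isHomogeneous_monomial _ α.2)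
  have key : basisRestrictSupport K (mos n d) α = ⟨monomial (α : Fin n →₀ ℕ) 1, hmem⟩ := by
    have : (basisRestrictSupport K (mos n d)).repr ⟨monomial (α : Fin n →₀ ℕ) 1, hmem⟩
        = Finsupp.single α 1 := by
      show Finsupp.supportedEquivFinsupp (mos n d) _ = _
      ext β
      show coeff (β : Fin n →₀ ℕ) (monomial (α : Fin n →₀ ℕ) (1:K)) = _
      rw [coeff_monomial, Finsupp.single_apply]
      simp [Subtype.ext_iff, eq_comm]
    rw [Module.Basis.apply_eq_iff]
    exact this
  rw [mBasis, Module.Basis.map_apply, key]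
  rfl


end

section Ops
variable {K : Type*} [Field K] {n d : ℕ}

noncomputable def rho (g : Matrix (Fin n) (Fin n) K) :
    Module.End K (homogeneousSubmodule (Fin n) K d) :=
  LinearMap.restrict (changeOfVar g).toLinearMap
    (fun p hp => (mem_homogeneousSubmodule _ _).2
      (changeOfVar_isHomogeneous g ((mem_homogeneousSubmodule _ _).1 hp)))

lemma coe_rho (g : Matrix (Fin n) (Fin n) K) (P : homogeneousSubmodule (Fin n) K d) :
    ((rho g P : homogeneousSubmodule (Fin n) K d) : MvPolynomial (Fin n) K)
      = changeOfVar g (P : MvPolynomial (Fin n) K) := rfl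

lemma rho_mul (g h : Matrix (Fin n) (Fin n) K) :
    (rho g * rho h : Module.End K (homogeneousSubmodule (Fin n) K d)) = rho (h * g) := by
  apply LinearMap.ext; intro P; apply Subtype.ext
  show ((rho g (rho h P) : homogeneousSubmodule (Fin n) K d) : MvPolynomial (Fin n) K) = _
  rw [coe_rho, coe_rho, coe_rho, ← changeOfVar_comp, AlgHom.comp_apply]

lemma rho_one : (rho 1 : Module.End K (homogeneousSubmodule (Fin n) K d)) = 1 := by
  apply LinearMap.ext; intro P; apply Subtype.ext
  show ((rho 1 P : homogeneousSubmodule (Fin n) K d) : MvPolynomial (Fin n) K) = _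
  rw [coe_rho, changeOfVar_one]
  rfl

noncomputable def Eab (a c : mos n d) : Module.End K (homogeneousSubmodule (Fin n) K d) :=
  Matrix.toLin (mBasis K n d) (mBasis K n d) (Matrix.single a c 1)

lemma Eab_apply (a c γ : mos n d) :
    Eab a c (mBasis K n d γ) = if γ = c then mBasis K n d a else 0 := by
  rw [Eab, Matrix.toLin_self]
  rw [Finset.sum_eq_single a]
  · by_cases h : γ = c
    · simp [Matrix.single, h]
    · simp only [Matrix.single, Matrix.of_apply]
      rw [if_neg (fun h' => h h'.2.symm)]
      simp [h]
  · intro i _ hi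
    simp [Matrix.single, Ne.symm hi]
  · simp

lemma Eab_mul (a c e : mos n d) :
    (Eab a c * Eab c e : Module.End K (homogeneousSubmodule (Fin n) K d)) = Eab a e := by
  rw [Eab, Eab, Eab, Module.End.mul_eq_comp, ← Matrix.toLin_mul,
    Matrix.single_mul_single_same, one_mul]

lemma span_Eab_eq_top :
    Submodule.span K (Set.range fun p : mos n d × mos n d => (Eab p.1 p.2 :
      Module.End K (homogeneousSubmodule (Fin n) K d))) = ⊤ := by
  have h1 : (Set.range fun p : mos n d × mos n d => (Eab p.1 p.2 :
      Module.End K (homogeneousSubmodule (Fin n) K d)))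
      = ⇑(Matrix.toLin (mBasis K n d) (mBasis K n d)).toLinearMap ''
        (Set.range (Matrix.stdBasis K (mos n d) (mos n d))) := by
    rw [← Set.range_comp]
    apply congrArg Set.range
    funext p
    obtain ⟨a, c⟩ := p
    show Eab a c = Matrix.toLin _ _ (Matrix.stdBasis K _ _ (a, c))
    rw [Matrix.stdBasis_eq_single, Eab]
  rw [h1, Submodule.span_image, Module.Basis.span_eq, Submodule.map_top, LinearMap.range_eq_top]
  exact (Matrix.toLin (mBasis K n d) (mBasis K n d)).surjective

end Ops

section Proj
variable {K : Type*} [Field K] {n d : ℕ}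

lemma coord_le_of_mem_mos {β : Fin n →₀ ℕ} (hβ : β ∈ mos n d) (i : Fin n) : β i ≤ d := by
  have := Finsupp.le_degree i β
  rwa [hβ] at this

lemma changeOfVar_diagonal (c : Fin n → K) (β : Fin n →₀ ℕ) :
    changeOfVar (Matrix.diagonal c) (monomial β (1 : K)) =
      (∏ i, c i ^ β i) • monomial β 1 := by
  have hf : ∀ i : Fin n, (∑ j, C (Matrix.diagonal c i j) * X j : MvPolynomial (Fin n) K)
      = C (c i) * X i := by
    intro i
    rw [Finset.sum_eq_single i]
    · rw [Matrix.diagonal_apply_eq]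
    · intro j _ hj
      rw [Matrix.diagonal_apply_ne' _ hj]
      simp
    · simp
  rw [changeOfVar, aeval_monomial]
  simp_rw [hf]
  rw [Finsupp.prod]
  simp_rw [mul_pow, ← C_pow]
  rw [Finset.prod_mul_distrib, ← map_prod]
  have h2 : (∏ i ∈ β.support, X i ^ β i : MvPolynomial (Fin n) K) = monomial β 1 := by
    rw [monomial_eq, C_1, one_mul, Finsupp.prod]
  have h3 : (∏ i ∈ β.support, c i ^ β i) = ∏ i, c i ^ β i := by
    apply Finset.prod_subset (Finset.subset_univ _)
    intro i _ hi
    rw [Finsupp.notMem_support_iff.mp hi, pow_zero]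
  rw [h2, h3, smul_eq_C_mul]
  simp

lemma rho_diagonal_apply (c : Fin n → K) (β : mos n d) :
    rho (Matrix.diagonal c) (mBasis K n d β)
      = (∏ i, c i ^ (β : Fin n →₀ ℕ) i) • mBasis K n d β := by
  apply Subtype.ext
  rw [coe_rho, coe_mBasis]
  rw [changeOfVar_diagonal]
  rw [SetLike.val_smul, coe_mBasis]

noncomputable def Qop (w : K) (i : Fin n) (e : ℕ) :
    Module.End K (homogeneousSubmodule (Fin n) K d) :=
  ∑ p ∈ Finset.range (d+1),
    ((Lagrange.basis (Finset.range (d+1)) (fun p => w ^ p) e).coeff p) •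
      rho (Matrix.diagonal fun i' => if i' = i then w ^ p else 1)

lemma Qop_apply (w : K) (hw : Set.InjOn (fun p : ℕ => w ^ p) (Finset.range (d+1) : Set ℕ))
    (i : Fin n) (e : ℕ) (he : e ≤ d) (β : mos n d) :
    Qop w i e (mBasis K n d β)
      = (if (β : Fin n →₀ ℕ) i = e then (1:K) else 0) • mBasis K n d β := by
  have hβi : (β : Fin n →₀ ℕ) i ≤ d := coord_le_of_mem_mos β.2 i
  rw [Qop, LinearMap.sum_apply]
  have key : ∀ p : ℕ,
      (rho (Matrix.diagonal fun i' => if i' = i then w ^ p else 1))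
        (mBasis K n d β) = (w ^ (β : Fin n →₀ ℕ) i) ^ p • mBasis K n d β := by
    intro p
    rw [rho_diagonal_apply]
    congr 1
    rw [Finset.prod_eq_single i]
    · rw [if_pos rfl, ← pow_mul, ← pow_mul, mul_comm]
    · intro j _ hj
      rw [if_neg hj, one_pow]
    · simp
  simp_rw [LinearMap.smul_apply, key, smul_smul]
  rw [← Finset.sum_smul]
  congr 1
  have hdeg : (Lagrange.basis (Finset.range (d+1)) (fun p : ℕ => w ^ p) e).natDegree < d + 1 := by
    rcases eq_or_ne ((Finset.range (d+1)).card) 0 with h | h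
    · simp at h
    · rw [Lagrange.natDegree_basis hw (by simp [Nat.lt_succ_iff, he])]
      simp [Nat.lt_succ_iff]
  rw [← Polynomial.eval_eq_sum_range' hdeg]
  by_cases hbe : (β : Fin n →₀ ℕ) i = e
  · rw [hbe, if_pos rfl]
    exact Lagrange.eval_basis_self hw (by simp [Nat.lt_succ_iff, he])
  · rw [if_neg hbe]
    exact Lagrange.eval_basis_of_ne (fun h => hbe (h.symm)) (by simp [Nat.lt_succ_iff, hβi])

lemma Eab_diag_eq_prod (w : K)
    (hw : Set.InjOn (fun p : ℕ => w ^ p) (Finset.range (d+1) : Set ℕ)) (α : mos n d) :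
    (Eab α α : Module.End K (homogeneousSubmodule (Fin n) K d))
      = ((List.finRange n).map (fun i => Qop w i ((α : Fin n →₀ ℕ) i))).prod := by
  apply (mBasis K n d).ext
  intro β
  have hact : ∀ l : List (Fin n),
      ((l.map (fun i => Qop w i ((α : Fin n →₀ ℕ) i))).prod) (mBasis K n d β)
        = ((l.map (fun i =>
            if (β : Fin n →₀ ℕ) i = (α : Fin n →₀ ℕ) i then (1:K) else 0)).prod)
            • mBasis K n d β := by
    intro l
    induction l with
    | nil => simp
    | cons a l ih =>
      rw [List.map_cons, List.prod_cons, List.map_cons, List.prod_cons]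
      rw [Module.End.mul_apply, ih, map_smul,
        Qop_apply w hw a _ (coord_le_of_mem_mos α.2 a), smul_smul]
      congr 1
      ring
  rw [hact, Eab_apply]
  have hprod : ((List.finRange n).map (fun i =>
      if (β : Fin n →₀ ℕ) i = (α : Fin n →₀ ℕ) i then (1:K) else 0)).prod
      = ∏ i : Fin n, (if (β : Fin n →₀ ℕ) i = (α : Fin n →₀ ℕ) i then (1:K) else 0) :=
    (Fin.prod_univ_def _).symm
  rw [hprod]
  by_cases hβα : β = α
  · subst hβα
    simp
  · rw [if_neg hβα]
    have : ∃ i, (β : Fin n →₀ ℕ) i ≠ (α : Fin n →₀ ℕ) i := by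
      by_contra h
      push_neg at h
      exact hβα (Subtype.ext (Finsupp.ext h))
    obtain ⟨i, hi⟩ := this
    have hz : (∏ i : Fin n, if (β : Fin n →₀ ℕ) i = (α : Fin n →₀ ℕ) i then (1:K) else 0) = 0 :=
      Finset.prod_eq_zero (Finset.mem_univ i) (if_neg hi)
    rw [hz, zero_smul]

end Proj

section Trans
variable {K : Type*} [Field K] {n d : ℕ}

lemma degree_add' (a b : Fin n →₀ ℕ) : (a + b).degree = a.degree + b.degree := by
  simp only [Finsupp.degree_eq_weight_one]
  exact map_add _ _ _

lemma degree_single' (i : Fin n) (k : ℕ) : (Finsupp.single i k).degree = k := by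
  rcases eq_or_ne k 0 with h | h
  · simp [h]
  · exact Finsupp.degree_single i k

lemma degree_erase' (i : Fin n) (β : Fin n →₀ ℕ) :
    (β.erase i).degree = β.degree - β i := by
  have h := congrArg Finsupp.degree (Finsupp.single_add_erase i β)
  rw [degree_add', degree_single'] at h
  omega

lemma changeOfVar_transvection (i j : Fin n) (hij : i ≠ j) (β : Fin n →₀ ℕ) :
    changeOfVar (Matrix.transvection i j (1:K)) (monomial β (1:K))
      = ∑ k ∈ Finset.range (β i + 1),
          (monomial (β.erase i + Finsupp.single i k + Finsupp.single j (β i - k))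
            (((β i).choose k : K))) := by
  have hf : ∀ i' : Fin n,
      (∑ j' : Fin n, C (Matrix.transvection i j (1:K) i' j') * X j' : MvPolynomial (Fin n) K)
        = if i' = i then X i + X j else X i' := by
    intro i'
    have he : ∀ j' : Fin n, Matrix.transvection i j (1:K) i' j'
        = (1 : Matrix (Fin n) (Fin n) K) i' j' + Matrix.single i j 1 i' j' := by
      intro j'; rfl
    simp_rw [he, map_add, add_mul, Finset.sum_add_distrib]
    have h1 : (∑ j' : Fin n, C ((1 : Matrix (Fin n) (Fin n) K) i' j') * X j'
        : MvPolynomial (Fin n) K) = X i' := by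
      rw [Finset.sum_eq_single i']
      · simp [Matrix.one_apply]
      · intro j' _ hj'
        simp [Matrix.one_apply, Ne.symm hj']
      · simp
    have h2 : (∑ j' : Fin n, C (Matrix.single i j (1:K) i' j') * X j'
        : MvPolynomial (Fin n) K) = if i' = i then X j else 0 := by
      rw [Finset.sum_eq_single j]
      · by_cases h : i' = i
        · subst h; simp [Matrix.single]
        · simp [Matrix.single, h, Ne.symm h]
      · intro j' _ hj'
        simp [Matrix.single, Ne.symm hj']
      · simp
    rw [h1, h2]
    by_cases h : i' = i
    · subst h; simp
    · simp [h]
  rw [changeOfVar, aeval_monomial]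
  rw [Finsupp.prod_fintype _ _ (fun _ => pow_zero _)]
  simp_rw [hf]
  rw [← Finset.mul_prod_erase Finset.univ _ (Finset.mem_univ i), if_pos rfl]
  have hrest : (∏ i' ∈ Finset.univ.erase i,
      (if i' = i then X i + X j else X i') ^ β i' : MvPolynomial (Fin n) K)
      = monomial (β.erase i) 1 := by
    rw [monomial_eq, C_1, one_mul, Finsupp.prod_fintype _ _ (fun _ => pow_zero _)]
    rw [← Finset.mul_prod_erase Finset.univ _ (Finset.mem_univ i)]
    rw [Finsupp.erase_same, pow_zero, one_mul]
    apply Finset.prod_congr rfl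
    intro i' hi'
    rw [if_neg (Finset.mem_erase.mp hi').1, Finsupp.erase_ne (Finset.mem_erase.mp hi').1]
  rw [hrest, add_pow, Finset.sum_mul]
  rw [map_one, one_mul]
  apply Finset.sum_congr rfl
  intro k _
  rw [X_pow_eq_monomial, X_pow_eq_monomial, ← C_eq_coe_nat, mul_right_comm,
    monomial_mul, monomial_mul, mul_one, mul_one, mul_comm, C_mul_monomial, mul_one]
  congr 1
  abel


lemma sandwich_trans (i j : Fin n) (hij : i ≠ j) (β γ : mos n d)
    (hm : 1 ≤ (β : Fin n →₀ ℕ) i)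
    (hγ : (γ : Fin n →₀ ℕ) = (β : Fin n →₀ ℕ).erase i
        + Finsupp.single i ((β : Fin n →₀ ℕ) i - 1) + Finsupp.single j 1) :
    (Eab γ γ : Module.End K (homogeneousSubmodule (Fin n) K d))
        * rho (Matrix.transvection i j (1:K)) * Eab β β
      = ((((β : Fin n →₀ ℕ) i : K)))
          • (Eab γ β : Module.End K (homogeneousSubmodule (Fin n) K d)) := by
  classical
  set m := (β : Fin n →₀ ℕ) i with hmdef
  have hβd : ((β : Fin n →₀ ℕ)).degree = d := β.2
  have hmd : m ≤ d := coord_le_of_mem_mos β.2 i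
  have hmem : ∀ k, k ≤ m → ((β : Fin n →₀ ℕ).erase i + Finsupp.single i k
      + Finsupp.single j (m - k)) ∈ mos n d := by
    intro k hk
    show Finsupp.degree _ = d
    rw [degree_add', degree_add', degree_single', degree_single', degree_erase', hβd]
    omega
  set vk : ℕ → mos n d := fun k => if h : k ≤ m
    then ⟨_, hmem k h⟩ else β with hvk
  have hcoevk : ∀ k, k ≤ m → ((vk k : Fin n →₀ ℕ))
      = (β : Fin n →₀ ℕ).erase i + Finsupp.single i k + Finsupp.single j (m - k) := by
    intro k hk
    rw [hvk]
    simp only [dif_pos hk]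
  have hvec : rho (Matrix.transvection i j (1:K)) (mBasis K n d β)
      = ∑ k ∈ Finset.range (m+1), (m.choose k : K) • mBasis K n d (vk k) := by
    apply Subtype.ext
    rw [coe_rho, coe_mBasis, changeOfVar_transvection i j hij]
    rw [AddSubmonoidClass.coe_finset_sum]
    apply Finset.sum_congr rfl
    intro k hk
    have hk' : k ≤ m := Nat.lt_succ_iff.mp (Finset.mem_range.mp hk)
    rw [SetLike.val_smul, coe_mBasis, hcoevk k hk', smul_monomial, smul_eq_mul, mul_one]
  have hγi : (γ : Fin n →₀ ℕ) i = m - 1 := by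
    rw [hγ, Finsupp.add_apply, Finsupp.add_apply, Finsupp.erase_same,
      Finsupp.single_eq_same, Finsupp.single_eq_of_ne' (Ne.symm hij), zero_add, add_zero]
  have hvkγ : vk (m - 1) = γ := by
    apply Subtype.ext
    rw [hcoevk _ (Nat.sub_le _ _), hγ, Nat.sub_sub_self hm]
  apply (mBasis K n d).ext
  intro c
  by_cases hc : c = β
  · subst hc
    rw [Module.End.mul_apply, Module.End.mul_apply, Eab_apply, if_pos rfl, hvec, map_sum]
    rw [LinearMap.smul_apply, Eab_apply, if_pos rfl]
    simp_rw [map_smul, Eab_apply]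
    rw [Finset.sum_eq_single (m-1)]
    · rw [if_pos hvkγ, Nat.choose_symm (by omega : 1 ≤ m), Nat.choose_one_right]
    · intro k hk hkne
      rw [if_neg, smul_zero]
      intro hcon
      apply hkne
      have : (vk k : Fin n →₀ ℕ) i = (γ : Fin n →₀ ℕ) i := by rw [hcon]
      rw [hcoevk k (Nat.lt_succ_iff.mp (Finset.mem_range.mp hk)), hγi] at this
      simp only [Finsupp.add_apply, Finsupp.erase_same, Finsupp.single_eq_same,
        Finsupp.single_eq_of_ne' (Ne.symm hij), zero_add, add_zero] at this
      omega
    · intro hcon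
      exact absurd (Finset.mem_range.mpr (by omega)) hcon
  · rw [Module.End.mul_apply, Module.End.mul_apply, Eab_apply, if_neg hc, map_zero, map_zero,
      LinearMap.smul_apply, Eab_apply, if_neg hc, smul_zero]


lemma degree_eq_sum_univ (f : Fin n →₀ ℕ) : f.degree = ∑ i, f i := by
  rw [Finsupp.degree]
  exact Finset.sum_subset (Finset.subset_univ _) (by
    intro x _ hx
    simpa using Finsupp.notMem_support_iff.mp hx)

lemma Eab_mem_of_closed (S : Submodule K (Module.End K (homogeneousSubmodule (Fin n) K d)))
    (hmul : ∀ x ∈ S, ∀ y ∈ S, x * y ∈ S)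
    (hproj : ∀ α : mos n d, Eab α α ∈ S)
    (htrans : ∀ i j : Fin n, i ≠ j → (rho (Matrix.transvection i j (1:K)) :
        Module.End K (homogeneousSubmodule (Fin n) K d)) ∈ S)
    (hchar' : ∀ k : ℕ, 1 ≤ k → k ≤ d → (k : K) ≠ 0)
    (α β : mos n d) : Eab α β ∈ S := by
  classical
  have key : ∀ N : ℕ, ∀ α β : mos n d,
      (∑ c, ((α : Fin n →₀ ℕ) c - (β : Fin n →₀ ℕ) c
        + ((β : Fin n →₀ ℕ) c - (α : Fin n →₀ ℕ) c))) ≤ N → Eab α β ∈ S := by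
    intro N
    induction N with
    | zero =>
      intro α β h0
      have : α = β := by
        apply Subtype.ext; apply Finsupp.ext; intro c
        have := Finset.sum_eq_zero_iff.mp (Nat.le_zero.mp h0) c (Finset.mem_univ c)
        omega
      subst this
      exact hproj α
    | succ N ih =>
      intro α β hN
      by_cases hab : α = β
      · subst hab; exact hproj α
      · have hdα : ∑ c, (α : Fin n →₀ ℕ) c = d := by
          rw [← degree_eq_sum_univ]; exact α.2
        have hdβ : ∑ c, (β : Fin n →₀ ℕ) c = d := by
          rw [← degree_eq_sum_univ]; exact β.2
        have hne : ∃ c, (α : Fin n →₀ ℕ) c ≠ (β : Fin n →₀ ℕ) c := by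
          by_contra h
          push_neg at h
          exact hab (Subtype.ext (Finsupp.ext h))
        have hi : ∃ c, (α : Fin n →₀ ℕ) c < (β : Fin n →₀ ℕ) c := by
          by_contra h
          push_neg at h
          obtain ⟨c0, hc0⟩ := hne
          have : ∑ c, (β : Fin n →₀ ℕ) c < ∑ c, (α : Fin n →₀ ℕ) c :=
            Finset.sum_lt_sum (fun c _ => h c) ⟨c0, Finset.mem_univ c0, by
              have := h c0; omega⟩
          omega
        have hj : ∃ c, (β : Fin n →₀ ℕ) c < (α : Fin n →₀ ℕ) c := by
          by_contra h
          push_neg at h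
          obtain ⟨c0, hc0⟩ := hne
          have : ∑ c, (α : Fin n →₀ ℕ) c < ∑ c, (β : Fin n →₀ ℕ) c :=
            Finset.sum_lt_sum (fun c _ => h c) ⟨c0, Finset.mem_univ c0, by
              have := h c0; omega⟩
          omega
        obtain ⟨i, hi⟩ := hi
        obtain ⟨j, hj⟩ := hj
        have hij : i ≠ j := by
          intro h; rw [h] at hi; omega
        have hβi : 1 ≤ (β : Fin n →₀ ℕ) i := by omega
        have hβid : (β : Fin n →₀ ℕ) i ≤ d := coord_le_of_mem_mos β.2 i
        have hγmem : ((β : Fin n →₀ ℕ).erase i + Finsupp.single i ((β : Fin n →₀ ℕ) i - 1)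
            + Finsupp.single j 1) ∈ mos n d := by
          show Finsupp.degree _ = d
          rw [degree_add', degree_add', degree_single', degree_single', degree_erase', β.2]
          omega
        set γ : mos n d := ⟨_, hγmem⟩ with hγdef
        have hγcoord : ∀ c, (γ : Fin n →₀ ℕ) c
            = if c = i then (β : Fin n →₀ ℕ) i - 1
              else if c = j then (β : Fin n →₀ ℕ) j + 1 else (β : Fin n →₀ ℕ) c := by
          intro c
          show ((β : Fin n →₀ ℕ).erase i + _ + _) c = _
          rw [Finsupp.add_apply, Finsupp.add_apply]
          by_cases hci : c = i
          · subst hci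
            rw [Finsupp.erase_same, Finsupp.single_eq_same,
              Finsupp.single_eq_of_ne' (Ne.symm hij), if_pos rfl, zero_add, add_zero]
          · rw [Finsupp.erase_ne hci, Finsupp.single_eq_of_ne' (fun h => hci h.symm), if_neg hci]
            by_cases hcj : c = j
            · subst hcj
              rw [Finsupp.single_eq_same, if_pos rfl, add_zero]
            · rw [Finsupp.single_eq_of_ne' (fun h => hcj h.symm), if_neg hcj, add_zero, add_zero]
        -- Eab γ β ∈ S
        have hγβ : (Eab γ β : Module.End K (homogeneousSubmodule (Fin n) K d)) ∈ S := by
          have hsand := sandwich_trans (K := K) i j hij β γ hβi (by rw [hγdef])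
          have hprod : (Eab γ γ : Module.End K (homogeneousSubmodule (Fin n) K d))
              * rho (Matrix.transvection i j (1:K)) * Eab β β ∈ S :=
            hmul _ (hmul _ (hproj γ) _ (htrans i j hij)) _ (hproj β)
          rw [hsand] at hprod
          have hcne : (((β : Fin n →₀ ℕ) i : K)) ≠ 0 := hchar' _ hβi hβid
          have := S.smul_mem (((β : Fin n →₀ ℕ) i : K))⁻¹ hprod
          rwa [smul_smul, inv_mul_cancel₀ hcne, one_smul] at this
        -- Eab α γ ∈ S by induction
        have hαγ : (Eab α γ : Module.End K (homogeneousSubmodule (Fin n) K d)) ∈ S := by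
          apply ih
          have hterm : ∀ c, ((α : Fin n →₀ ℕ) c - (γ : Fin n →₀ ℕ) c
              + ((γ : Fin n →₀ ℕ) c - (α : Fin n →₀ ℕ) c))
              ≤ ((α : Fin n →₀ ℕ) c - (β : Fin n →₀ ℕ) c
              + ((β : Fin n →₀ ℕ) c - (α : Fin n →₀ ℕ) c)) := by
            intro c
            rw [hγcoord c]
            by_cases hci : c = i
            · subst hci; rw [if_pos rfl]; omega
            · rw [if_neg hci]
              by_cases hcj : c = j
              · subst hcj; rw [if_pos rfl]; omega
              · rw [if_neg hcj]
          have hstrict : ((α : Fin n →₀ ℕ) i - (γ : Fin n →₀ ℕ) i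
              + ((γ : Fin n →₀ ℕ) i - (α : Fin n →₀ ℕ) i))
              < ((α : Fin n →₀ ℕ) i - (β : Fin n →₀ ℕ) i
              + ((β : Fin n →₀ ℕ) i - (α : Fin n →₀ ℕ) i)) := by
            rw [hγcoord i, if_pos rfl]
            omega
          have := Finset.sum_lt_sum (fun c _ => hterm c) ⟨i, Finset.mem_univ i, hstrict⟩
          omega
        rw [← Eab_mul α γ β]
        exact hmul _ hαγ _ hγβ
  exact key _ α β le_rfl

end Trans

section Unit
variable {R K : Type*} [CommRing R] [IsDomain R] [IsDiscreteValuationRing R]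
  [Field K] [Algebra R K] [IsFractionRing R K]

lemma cast_ne_zero_of_char {d : ℕ} (hchar : ringChar K = 0 ∨ d < ringChar K)
    (k : ℕ) (h1 : 1 ≤ k) (h2 : k ≤ d) : (k : K) ≠ 0 := by
  intro h0
  have hC : CharP K (ringChar K) := ringChar.charP K
  have hdvd : ringChar K ∣ k := (CharP.cast_eq_zero_iff K (ringChar K) k).mp h0
  rcases hchar with h | h
  · rw [h, zero_dvd_iff] at hdvd
    omega
  · have := Nat.le_of_dvd (by omega) hdvd
    omega

lemma one_add_pow_eq (x : R) (k : ℕ) : ∃ s : R, (1 + x)^k = 1 + k * x + x^2 * s := by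
  induction k with
  | zero => exact ⟨0, by push_cast; ring⟩
  | succ k ih =>
    obtain ⟨s, hs⟩ := ih
    refine ⟨s + k + x * s, ?_⟩
    rw [pow_succ, hs]
    push_cast
    ring

lemma exists_good_unit {d : ℕ} (hchar : ringChar K = 0 ∨ d < ringChar K) :
    ∃ u : Rˣ, ∀ a b : ℕ, a ≤ d → b ≤ d →
      (algebraMap R K (u : R))^a = (algebraMap R K (u : R))^b → a = b := by
  classical
  obtain ⟨π, hπ⟩ := IsDiscreteValuationRing.exists_irreducible R
  have hπ0 : π ≠ 0 := hπ.ne_zero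
  have hinj : Function.Injective (algebraMap R K) := IsFractionRing.injective R K
  have hkR : ∀ k : ℕ, 1 ≤ k → k ≤ d → ((k : ℕ) : R) ≠ 0 := by
    intro k h1 h2 h0
    apply cast_ne_zero_of_char hchar k h1 h2
    rw [← map_natCast (algebraMap R K), h0, map_zero]
  have hbound : ∀ k : ℕ, 1 ≤ k ∧ k ≤ d → ∃ m : ℕ, ∀ M, m ≤ M → ¬ (π ^ M ∣ ((k : ℕ) : R)) := by
    rintro k ⟨h1, h2⟩
    obtain ⟨m, v, hv⟩ := IsDiscreteValuationRing.eq_unit_mul_pow_irreducible (hkR k h1 h2) hπ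
    refine ⟨m + 1, fun M hM hdvd => ?_⟩
    have h3 : π ^ (m + 1) ∣ ((k : ℕ) : R) := dvd_trans (pow_dvd_pow π hM) hdvd
    rw [hv] at h3
    have h4 : π ^ m * π ∣ π ^ m * (v : R) := by
      rw [← pow_succ]
      rwa [mul_comm ((v : R)) (π ^ m)] at h3
    have h5 : π ∣ (v : R) := (mul_dvd_mul_iff_left (pow_ne_zero m hπ0)).mp h4
    exact hπ.not_isUnit (isUnit_of_dvd_unit h5 v.isUnit)
  set g : ℕ → ℕ := fun k => if h : 1 ≤ k ∧ k ≤ d then Classical.choose (hbound k h) else 0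
    with hg
  set N : ℕ := (Finset.range (d+1)).sup g + 1 with hNdef
  have hN : ∀ k : ℕ, 1 ≤ k → k ≤ d → ¬ (π ^ N ∣ ((k : ℕ) : R)) := by
    intro k h1 h2
    have hk : (1 ≤ k ∧ k ≤ d) := ⟨h1, h2⟩
    have hgk : g k = Classical.choose (hbound k hk) := by rw [hg]; simp [hk]
    have hle : g k ≤ N := by
      have := Finset.le_sup (f := g) (Finset.mem_range.mpr (by omega : k < d + 1))
      omega
    have := Classical.choose_spec (hbound k hk) N (by rw [← hgk]; exact hle)
    exact this
  have hNU : ¬ IsUnit (-(π ^ N)) := by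
    rw [IsUnit.neg_iff]
    intro h
    exact hπ.not_isUnit (isUnit_of_dvd_unit (dvd_pow_self π (by omega : N ≠ 0)) h)
  have hu : IsUnit (1 + π ^ N) := by
    have := IsLocalRing.isUnit_one_sub_self_of_mem_nonunits (-(π ^ N)) hNU
    rwa [sub_neg_eq_add] at this
  refine ⟨hu.unit, ?_⟩
  have hcoe : ((hu.unit : Rˣ) : R) = 1 + π ^ N := hu.unit_spec
  have hx0 : (1 + π ^ N : R) ≠ 0 := by
    intro h
    exact hNU (by rw [show -(π^N) = 1 - (1 + π^N) by ring, h, sub_zero]; exact isUnit_one)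
  have aux : ∀ a b : ℕ, a < b → b ≤ d →
      (algebraMap R K ((hu.unit : Rˣ) : R))^a = (algebraMap R K ((hu.unit : Rˣ) : R))^b
        → False := by
    intro a b hab hbd heq
    have hR : (1 + π ^ N : R)^a = (1 + π ^ N)^b := by
      apply hinj
      rw [map_pow, map_pow, ← hcoe]
      exact heq
    have hcancel : (1 : R) = (1 + π ^ N)^(b - a) := by
      have hb' : (1 + π ^ N : R)^b = (1 + π ^ N)^a * (1 + π ^ N)^(b-a) := by
        rw [← pow_add]
        congr 1
        omega
      apply mul_left_cancel₀ (pow_ne_zero a hx0)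
      rw [mul_one, ← hb', ← hR]
    obtain ⟨s, hs⟩ := one_add_pow_eq (π ^ N) (b - a)
    rw [hs] at hcancel
    have h1 : π ^ N * (((b - a : ℕ) : R)) = π ^ N * (-(π ^ N * s)) := by
      linear_combination -hcancel
    have h2 := mul_left_cancel₀ (pow_ne_zero N hπ0) h1
    have hdvd : π ^ N ∣ (((b - a : ℕ) : R)) := ⟨-s, by rw [h2]; ring⟩
    exact hN (b - a) (by omega) (by omega) hdvd
  intro a b ha hb heq
  rcases lt_trichotomy a b with h | h | h
  · exact absurd heq (fun he => aux a b h hb he)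
  · exact h
  · exact absurd heq (fun he => aux b a h ha he.symm)

end Unit
end SpanCOV

open SpanCOV in
/-- The `K`-span of the change-of-variables operators `ρ_{n,d}(g)`, `g ∈ GL(n,R)`, is the
full endomorphism algebra of `K[x_1,…,x_n]_{(d)}`; in other words, the `R`-module spanned
by the image of `ρ_{n,d}` is an order in `End_K(K[x_1,…,x_n]_{(d)})`.  An endomorphism `f`
of the space of homogeneous polynomials of degree `d` "is" the operator `ρ_{n,d}(g)`
precisely when it agrees with the substitution map `changeOfVar g` on every homogeneous
polynomial. -/
theorem span_changeOfVar_GLnR_operators_eq_top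
    (R K : Type*) [CommRing R] [IsDomain R] [IsDiscreteValuationRing R]
    [Field K] [Algebra R K] [IsFractionRing R K]
    (n d : ℕ) (hn : 1 ≤ n) (hd : 1 ≤ d)
    (hchar : ringChar K = 0 ∨ d < ringChar K) :
    Submodule.span K
      {f : Module.End K (homogeneousSubmodule (Fin n) K d) |
        ∃ g : GL (Fin n) R,
          ∀ P : homogeneousSubmodule (Fin n) K d,
            (f P : MvPolynomial (Fin n) K) =
              changeOfVar ((g : Matrix (Fin n) (Fin n) R).map (algebraMap R K))
                (P : MvPolynomial (Fin n) K)} = ⊤ := by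
  classical
  have hTeq : {f : Module.End K (homogeneousSubmodule (Fin n) K d) |
        ∃ g : GL (Fin n) R,
          ∀ P : homogeneousSubmodule (Fin n) K d,
            (f P : MvPolynomial (Fin n) K) =
              changeOfVar ((g : Matrix (Fin n) (Fin n) R).map (algebraMap R K))
                (P : MvPolynomial (Fin n) K)}
      = Set.range (fun g : GL (Fin n) R =>
          (rho ((g : Matrix (Fin n) (Fin n) R).map (algebraMap R K)) :
            Module.End K (homogeneousSubmodule (Fin n) K d))) := by
    ext f
    constructor
    · rintro ⟨g, hg⟩
      exact ⟨g, (LinearMap.ext fun P => Subtype.ext (by rw [coe_rho]; exact hg P)).symm⟩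
    · rintro ⟨g, rfl⟩
      exact ⟨g, fun P => by rw [coe_rho]⟩
  rw [hTeq]
  set T := Set.range (fun g : GL (Fin n) R =>
      (rho ((g : Matrix (Fin n) (Fin n) R).map (algebraMap R K)) :
        Module.End K (homogeneousSubmodule (Fin n) K d))) with hT
  set S := Submodule.span K T with hS
  have hmemT : ∀ g : GL (Fin n) R,
      (rho ((g : Matrix (Fin n) (Fin n) R).map (algebraMap R K)) :
        Module.End K (homogeneousSubmodule (Fin n) K d)) ∈ T := fun g => ⟨g, rfl⟩
  have hmapone : ((1 : GL (Fin n) R) : Matrix (Fin n) (Fin n) R).map (algebraMap R K) = 1 := by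
    rw [Units.val_one]
    exact Matrix.map_one _ (map_zero _) (map_one _)
  have hone : (1 : Module.End K (homogeneousSubmodule (Fin n) K d)) ∈ T := by
    have := hmemT 1
    rwa [hmapone, rho_one] at this
  have hTmul : ∀ x ∈ T, ∀ y ∈ T, x * y ∈ T := by
    rintro x ⟨g, rfl⟩ y ⟨h, rfl⟩
    refine ⟨h * g, ?_⟩
    show rho _ = _
    rw [Units.val_mul, Matrix.map_mul]
    exact (rho_mul _ _).symm
  have hSmul : ∀ x ∈ S, ∀ y ∈ S, x * y ∈ S := by
    intro x hx y hy
    have h1 : x * y ∈ S * S := Submodule.mul_mem_mul hx hy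
    have h2 : S * S ≤ S := by
      rw [hS, Submodule.span_mul_span]
      apply Submodule.span_le.mpr
      intro z hz
      rw [Set.mem_mul] at hz
      obtain ⟨z1, hz1, z2, hz2, rfl⟩ := hz
      exact Submodule.subset_span (hTmul z1 hz1 z2 hz2)
    exact h2 h1
  have hchar' : ∀ k : ℕ, 1 ≤ k → k ≤ d → (k : K) ≠ 0 := fun k h1 h2 =>
    cast_ne_zero_of_char (K := K) hchar k h1 h2
  obtain ⟨u, hu⟩ := exists_good_unit (R := R) (K := K) (d := d) hchar
  set w : K := algebraMap R K (u : R) with hw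
  have hwInj : Set.InjOn (fun p : ℕ => w ^ p) ((Finset.range (d+1) : Finset ℕ) : Set ℕ) := by
    intro a ha b hb hab
    rw [Finset.coe_range, Set.mem_Iio] at ha hb
    exact hu a b (by omega) (by omega) hab
  have hdiagmem : ∀ (i : Fin n) (p : ℕ),
      (rho (Matrix.diagonal fun i' => if i' = i then w ^ p else 1) :
        Module.End K (homogeneousSubmodule (Fin n) K d)) ∈ S := by
    intro i p
    set t : Fin n → Rˣ := fun i' => if i' = i then u ^ p else 1 with ht
    have hdd : Matrix.diagonal (fun i' => ((t i' : R))) *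
        Matrix.diagonal (fun i' => (((t i')⁻¹ : Rˣ) : R)) = 1 := by
      rw [Matrix.diagonal_mul_diagonal]
      have : (fun i' => (t i' : R) * (((t i')⁻¹ : Rˣ) : R)) = fun _ => (1 : R) :=
        funext fun i' => by rw [← Units.val_mul, mul_inv_cancel, Units.val_one]
      rw [this, Matrix.diagonal_one]
    have hdd2 : Matrix.diagonal (fun i' => (((t i')⁻¹ : Rˣ) : R)) *
        Matrix.diagonal (fun i' => ((t i' : R))) = 1 := by
      rw [Matrix.diagonal_mul_diagonal]
      have : (fun i' => (((t i')⁻¹ : Rˣ) : R) * (t i' : R)) = fun _ => (1 : R) :=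
        funext fun i' => by rw [← Units.val_mul, inv_mul_cancel, Units.val_one]
      rw [this, Matrix.diagonal_one]
    set G : GL (Fin n) R := ⟨Matrix.diagonal (fun i' => ((t i' : R))),
      Matrix.diagonal (fun i' => (((t i')⁻¹ : Rˣ) : R)), hdd, hdd2⟩ with hG
    have hGmap : ((G : Matrix (Fin n) (Fin n) R).map (algebraMap R K))
        = Matrix.diagonal fun i' => if i' = i then w ^ p else 1 := by
      show (Matrix.diagonal (fun i' => ((t i' : R)))).map (algebraMap R K) = _
      rw [Matrix.diagonal_map (map_zero _)]
      apply congrArg Matrix.diagonal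
      funext i'
      by_cases h : i' = i
      · rw [ht]
        simp only [if_pos h]
        rw [Units.val_pow_eq_pow_val, map_pow, hw]
      · rw [ht]
        simp only [if_neg h]
        rw [Units.val_one, map_one]
    apply Submodule.subset_span
    rw [← hGmap]
    exact hmemT G
  have hproj : ∀ α : mos n d,
      (Eab α α : Module.End K (homogeneousSubmodule (Fin n) K d)) ∈ S := by
    intro α
    rw [Eab_diag_eq_prod w hwInj α]
    have hlist : ∀ l : List (Fin n),
        ((l.map (fun i => (Qop w i ((α : Fin n →₀ ℕ) i) :
          Module.End K (homogeneousSubmodule (Fin n) K d)))).prod) ∈ S := by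
      intro l
      induction l with
      | nil =>
        simpa using Submodule.subset_span hone
      | cons a l ih =>
        rw [List.map_cons, List.prod_cons]
        refine hSmul _ ?_ _ ih
        rw [Qop]
        apply Submodule.sum_mem
        intro p _
        exact Submodule.smul_mem _ _ (hdiagmem a p)
    exact hlist _
  have htransmem : ∀ i j : Fin n, i ≠ j →
      (rho (Matrix.transvection i j (1:K)) :
        Module.End K (homogeneousSubmodule (Fin n) K d)) ∈ S := by
    intro i j hij
    have h1 : Matrix.transvection i j (1:R) * Matrix.transvection i j (-1:R) = 1 := by
      rw [Matrix.transvection_mul_transvection_same i j hij]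
      norm_num [Matrix.transvection_zero]
    have h2 : Matrix.transvection i j (-1:R) * Matrix.transvection i j (1:R) = 1 := by
      rw [Matrix.transvection_mul_transvection_same i j hij]
      norm_num [Matrix.transvection_zero]
    set G : GL (Fin n) R := ⟨Matrix.transvection i j (1:R),
      Matrix.transvection i j (-1:R), h1, h2⟩ with hG
    have hGmap : ((G : Matrix (Fin n) (Fin n) R).map (algebraMap R K))
        = Matrix.transvection i j (1:K) := by
      show (Matrix.transvection i j (1:R)).map (algebraMap R K) = _
      ext i' j'
      simp [Matrix.map_apply, Matrix.transvection, Matrix.single, Matrix.one_apply,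
        apply_ite (algebraMap R K)]
    apply Submodule.subset_span
    rw [← hGmap]
    exact hmemT G
  rw [eq_top_iff, ← span_Eab_eq_top (K := K) (n := n) (d := d)]
  apply Submodule.span_le.mpr
  rintro x ⟨⟨a, c⟩, rfl⟩
  exact Eab_mem_of_closed S hSmul hproj htransmem hchar' a c
end

section
/- Let R be a discrete valuation ring with uniformizer ϖ whose fraction field K has characteristic 2. For every integer m ≥ 0, let L_m be the R-submodule of K[x,y]_{(2)} given by L_m = R·x² + R·y² + ϖ^m R·xy. Then L_m is an R-lattice in K[x,y]_{(2)} and for every g ∈ GL(2,R) one has ρ_{2,2}(g)(L_m) = L_m; that is, each L_m is invariant under the change-of-variables action of GL(2,R). -/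
open MvPolynomial

/-- An `R`-lattice in the space of homogeneous polynomials of degree `d` over `K`:
a finitely generated `R`-submodule whose `K`-span is the whole space `K[x_1,…,x_n]_{(d)}`. -/
def IsPolyLattice (R : Type*) {K : Type*} [CommRing R] [Field K] [Algebra R K]
    {n : ℕ} (d : ℕ) (L : Submodule R (MvPolynomial (Fin n) K)) : Prop :=
  L.FG ∧ Submodule.span K (L : Set (MvPolynomial (Fin n) K)) =
    homogeneousSubmodule (Fin n) K d

/-- The lattice `L_m = R·x² + R·y² + ϖ^m R·xy` inside `K[x,y]_{(2)}`. -/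
noncomputable def Lm (R K : Type*) [CommRing R] [Field K] [Algebra R K]
    (ϖ : R) (m : ℕ) : Submodule R (MvPolynomial (Fin 2) K) :=
  Submodule.span R
    {X 0 ^ 2, X 1 ^ 2, C (algebraMap R K (ϖ ^ m)) * (X 0 * X 1)}

/-- Composition law for the change-of-variables action. -/
theorem changeOfVar_comp {K : Type*} [CommSemiring K] {n : ℕ}
    (A B : Matrix (Fin n) (Fin n) K) :
    (changeOfVar B).comp (changeOfVar A) = changeOfVar (A * B) := by
  apply MvPolynomial.algHom_ext
  intro i
  simp only [changeOfVar, AlgHom.comp_apply, aeval_X, map_sum, map_mul, aeval_C,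
    algebraMap_eq, Matrix.mul_apply, Finset.mul_sum, map_sum]
  rw [Finset.sum_comm]
  refine Finset.sum_congr rfl fun k _ => ?_
  rw [Finset.sum_mul]
  refine Finset.sum_congr rfl fun j _ => ?_
  rw [mul_assoc]

theorem changeOfVar_one {K : Type*} [CommSemiring K] {n : ℕ} :
    changeOfVar (1 : Matrix (Fin n) (Fin n) K) = AlgHom.id K _ := by
  apply MvPolynomial.algHom_ext
  intro i
  simp [changeOfVar, Matrix.one_apply, ite_and]

theorem smul_RC {R K : Type*} [CommRing R] [Field K] [Algebra R K] (r : R)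
    (p : MvPolynomial (Fin 2) K) :
    r • p = C (algebraMap R K r) * p := by
  rw [← smul_eq_C_mul, algebraMap_smul]

/-- Key inclusion: any matrix over `R` maps `L_m` into `L_m` (using `char K = 2`). -/
theorem Lm_map_le (R K : Type*) [CommRing R] [Field K] [Algebra R K] [CharP K 2]
    (ϖ : R) (m : ℕ) (g : Matrix (Fin 2) (Fin 2) R) :
    (Lm R K ϖ m).map (((changeOfVar (g.map (algebraMap R K))).toLinearMap).restrictScalars R)
      ≤ Lm R K ϖ m := by
  set f := algebraMap R K
  have h2 : (2 : MvPolynomial (Fin 2) K) = 0 := by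
    haveI : CharP (MvPolynomial (Fin 2) K) 2 := inferInstance
    exact CharP.cast_eq_zero (MvPolynomial (Fin 2) K) 2
  have hsq : ∀ u v : MvPolynomial (Fin 2) K, (u + v) ^ 2 = u ^ 2 + v ^ 2 := by
    intro u v
    rw [add_sq, h2]
    ring
  have mem1 : X (0 : Fin 2) ^ 2 ∈ Lm R K ϖ m := Submodule.subset_span (by simp)
  have mem2 : X (1 : Fin 2) ^ 2 ∈ Lm R K ϖ m := Submodule.subset_span (by simp)
  have mem3 : C (f (ϖ ^ m)) * (X (0 : Fin 2) * X 1) ∈ Lm R K ϖ m :=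
    Submodule.subset_span (by simp [f])
  rw [Lm, Submodule.map_span, Submodule.span_le]
  rintro _ ⟨p, hp, rfl⟩
  simp only [Set.mem_insert_iff, Set.mem_singleton_iff] at hp
  have hX : ∀ i : Fin 2,
      (changeOfVar (g.map f)) (X i) = C (f (g i 0)) * X 0 + C (f (g i 1)) * X 1 := by
    intro i
    simp [changeOfVar, Fin.sum_univ_two, Matrix.map_apply]
  rcases hp with rfl | rfl | rfl
  · show (changeOfVar (g.map f)) (X 0 ^ 2) ∈ Lm R K ϖ m
    rw [map_pow, hX, hsq, mul_pow, mul_pow, ← map_pow (C : K →+* _), ← map_pow (C : K →+* _),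
      ← map_pow f, ← map_pow f, ← smul_RC, ← smul_RC]
    exact add_mem (Submodule.smul_mem _ _ mem1) (Submodule.smul_mem _ _ mem2)
  · show (changeOfVar (g.map f)) (X 1 ^ 2) ∈ Lm R K ϖ m
    rw [map_pow, hX, hsq, mul_pow, mul_pow, ← map_pow (C : K →+* _), ← map_pow (C : K →+* _),
      ← map_pow f, ← map_pow f, ← smul_RC, ← smul_RC]
    exact add_mem (Submodule.smul_mem _ _ mem1) (Submodule.smul_mem _ _ mem2)
  · show (changeOfVar (g.map f)) (C (f (ϖ ^ m)) * (X 0 * X 1)) ∈ Lm R K ϖ m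
    have : (changeOfVar (g.map f)) (C (f (ϖ ^ m)) * (X 0 * X 1)) =
        (ϖ ^ m * (g 0 0 * g 1 0)) • (X 0 ^ 2) + (ϖ ^ m * (g 0 1 * g 1 1)) • (X 1 ^ 2) +
        (g 0 0 * g 1 1 + g 0 1 * g 1 0) • (C (f (ϖ ^ m)) * (X 0 * X 1)) := by
      rw [map_mul, map_mul, hX, hX]
      rw [changeOfVar, aeval_C]
      simp only [smul_RC, map_mul, map_add, algebraMap_eq]
      ring
    rw [this]
    exact add_mem (add_mem (Submodule.smul_mem _ _ mem1) (Submodule.smul_mem _ _ mem2))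
      (Submodule.smul_mem _ _ mem3)

/-- The `K`-span of the three generators is the full degree-2 homogeneous component. -/
theorem span_eq_homog (R K : Type*) [CommRing R] [Field K] [Algebra R K]
    (c : K) (hc : c ≠ 0) :
    Submodule.span K {X (0:Fin 2) ^ 2, X 1 ^ 2, C c * (X 0 * X 1)} =
      homogeneousSubmodule (Fin 2) K 2 := by
  apply le_antisymm
  · rw [Submodule.span_le]
    rintro p hp
    simp only [Set.mem_insert_iff, Set.mem_singleton_iff] at hp
    rcases hp with rfl | rfl | rfl
    · exact (isHomogeneous_X K 0).pow 2
    · exact (isHomogeneous_X K 1).pow 2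
    · exact (isHomogeneous_C _ c).mul ((isHomogeneous_X K 0).mul (isHomogeneous_X K 1))
  · intro p hp
    have hxy : (X (0:Fin 2) * X 1 : MvPolynomial (Fin 2) K) ∈
        Submodule.span K {X (0:Fin 2) ^ 2, X 1 ^ 2, C c * (X 0 * X 1)} := by
      have h3 : C c * (X (0:Fin 2) * X 1) ∈
          Submodule.span K {X (0:Fin 2) ^ 2, X 1 ^ 2, C c * (X 0 * X 1)} :=
        Submodule.subset_span (by simp)
      have key : c⁻¹ • (C c * (X (0:Fin 2) * X 1)) = X 0 * X 1 := by
        rw [smul_eq_C_mul, ← mul_assoc, ← C_mul, inv_mul_cancel₀ hc, C_1, one_mul]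
      have := Submodule.smul_mem _ c⁻¹ h3
      rwa [key] at this
    have h1 : (X (0:Fin 2) ^ 2 : MvPolynomial (Fin 2) K) ∈
        Submodule.span K {X (0:Fin 2) ^ 2, X 1 ^ 2, C c * (X 0 * X 1)} :=
      Submodule.subset_span (by simp)
    have h2 : (X (1:Fin 2) ^ 2 : MvPolynomial (Fin 2) K) ∈
        Submodule.span K {X (0:Fin 2) ^ 2, X 1 ^ 2, C c * (X 0 * X 1)} :=
      Submodule.subset_span (by simp)
    rw [p.as_sum]
    refine Submodule.sum_mem _ fun d hd => ?_
    have hdeg : d 0 + d 1 = 2 := by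
      have h := hp (mem_support_iff.mp hd)
      have : (Finsupp.weight 1) d = d 0 + d 1 := by
        rw [Finsupp.weight_apply, Finsupp.sum_fintype _ _ (fun i => by simp),
          Fin.sum_univ_two]
        simp
      omega
    have hmon : monomial d (coeff d p) = C (coeff d p) * (X 0 ^ d 0 * X 1 ^ d 1) := by
      rw [monomial_eq, Finsupp.prod_fintype _ _ (fun i => pow_zero _), Fin.prod_univ_two]
    have : (d 0 = 0 ∧ d 1 = 2) ∨ (d 0 = 1 ∧ d 1 = 1) ∨ (d 0 = 2 ∧ d 1 = 0) := by omega
    rcases this with ⟨e0, e1⟩ | ⟨e0, e1⟩ | ⟨e0, e1⟩ <;> rw [hmon, e0, e1]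
    · have := Submodule.smul_mem _ (coeff d p) h2
      rw [smul_eq_C_mul] at this
      simpa using this
    · have := Submodule.smul_mem _ (coeff d p) hxy
      rw [smul_eq_C_mul] at this
      simpa using this
    · have := Submodule.smul_mem _ (coeff d p) h1
      rw [smul_eq_C_mul] at this
      simpa using this

/-- In equal characteristic 2, each `L_m = R·x² + R·y² + ϖ^m R·xy` is an `R`-lattice in
`K[x,y]_{(2)}` invariant under the change-of-variables action of `GL(2,R)`. -/
theorem Lm_is_invariant_lattice
    (R K : Type*) [CommRing R] [IsDomain R] [IsDiscreteValuationRing R]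
    [Field K] [Algebra R K] [IsFractionRing R K] [CharP K 2]
    (ϖ : R) (hϖ : Irreducible ϖ) (m : ℕ) :
    IsPolyLattice R 2 (Lm R K ϖ m) ∧
      ∀ g : GL (Fin 2) R,
        (Lm R K ϖ m).map (((changeOfVar ((g : Matrix (Fin 2) (Fin 2) R).map
          (algebraMap R K))).toLinearMap).restrictScalars R) = Lm R K ϖ m := by
  constructor
  · constructor
    · exact Submodule.fg_span (Set.toFinite _)
    · rw [Lm, Submodule.span_span_of_tower]
      exact span_eq_homog R K _
        ((map_ne_zero_iff _ (IsFractionRing.injective R K)).mpr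
          (pow_ne_zero m hϖ.ne_zero))
  · intro g
    set f := algebraMap R K with hf
    set A : Matrix (Fin 2) (Fin 2) K := (g : Matrix (Fin 2) (Fin 2) R).map f with hA
    set B : Matrix (Fin 2) (Fin 2) K := ((g⁻¹ : GL (Fin 2) R) : Matrix (Fin 2) (Fin 2) R).map f
      with hB
    have hBA : B * A = 1 := by
      rw [hA, hB, ← Matrix.map_mul]
      have : ((g⁻¹ : GL (Fin 2) R) : Matrix (Fin 2) (Fin 2) R) *
          (g : Matrix (Fin 2) (Fin 2) R) = 1 := g.inv_mul
      rw [this, Matrix.map_one f (map_zero f) (map_one f)]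
    have hcomp : (changeOfVar A).comp (changeOfVar B) = AlgHom.id K _ := by
      rw [changeOfVar_comp, hBA, changeOfVar_one]
    refine le_antisymm (Lm_map_le R K ϖ m _) ?_
    have hle' := Lm_map_le R K ϖ m ((g⁻¹ : GL (Fin 2) R) : Matrix (Fin 2) (Fin 2) R)
    have hmap : ((Lm R K ϖ m).map
          (((changeOfVar B).toLinearMap).restrictScalars R)).map
          (((changeOfVar A).toLinearMap).restrictScalars R) = Lm R K ϖ m := by
      rw [← Submodule.map_comp]
      have hid : (((changeOfVar A).toLinearMap).restrictScalars R).comp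
          (((changeOfVar B).toLinearMap).restrictScalars R) =
          LinearMap.id (M := MvPolynomial (Fin 2) K) := by
        apply LinearMap.ext
        intro p
        have := congrArg (fun φ => φ p) hcomp
        simpa using this
      rw [hid, Submodule.map_id]
    calc Lm R K ϖ m
        = ((Lm R K ϖ m).map (((changeOfVar B).toLinearMap).restrictScalars R)).map
            (((changeOfVar A).toLinearMap).restrictScalars R) := hmap.symm
      _ ≤ (Lm R K ϖ m).map (((changeOfVar A).toLinearMap).restrictScalars R) :=
          Submodule.map_mono hle'
end
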